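/- If h ∈ H(T) satisfies h* ∘ i ≤ h and dom(h) = dom(h* ∘ i), and A^∞ h is lower semicontinuous, then A^∞ h is autoconjugate: (A^∞ h)* ∘ i = A^∞ h. -/

import Mathlib

open NormedSpace

noncomputable section

/-- Convexity for extended-real-valued functions. -/
def EConvexOn {E : Type*} [AddCommMonoid E] [Module ℝ E] (f : E → EReal) : Prop :=
  ∀ x y : E, ∀ a b : ℝ, 0 ≤ a → 0 ≤ b → a + b = 1 →
    f (a • x + b • y) ≤ (a : EReal) * f x + (b : EReal) * f y

/-- Properness: somewhere finite and never `⊥` (i.e. values in `ℝ ∪ {+∞}`). -/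
def EProper {E : Type*} (f : E → EReal) : Prop :=
  (∃ x, f x ≠ ⊤) ∧ ∀ x, f x ≠ ⊥

variable {X : Type*} [NormedAddCommGroup X] [NormedSpace ℝ X]

/-- The ε-subdifferential of `f : X → ℝ ∪ {+∞}` at `x`. -/
def epsSubdiff (f : X → EReal) (ε : ℝ) (x : X) : Set (StrongDual ℝ X) :=
  {p | f x ≠ ⊤ ∧ ∀ y : X, f x + ((p (y - x) : ℝ) : EReal) ≤ f y + (ε : EReal)}

/-- The Fenchel conjugate of `f : X → ℝ ∪ {+∞}`. -/
def fconj (f : X → EReal) (p : StrongDual ℝ X) : EReal :=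
  ⨆ y : X, ((p y : ℝ) : EReal) - f y

/-- The duality pairing `⟨x, x*⟩` on `X × X*`. -/
def pairing (z : X × StrongDual ℝ X) : ℝ := z.2 z.1

/-- `h* ∘ i`, the conjugate of `h : X × X* → ℝ ∪ {+∞}` with respect to the pairing
`⟨(x,x*),(y*,y)⟩ = ⟨x,y*⟩ + ⟨y,x*⟩`, composed with the swap `i(x,x*) = (x*,x)`. -/
def conjI (h : X × StrongDual ℝ X → EReal) (z : X × StrongDual ℝ X) : EReal :=
  ⨆ w : X × StrongDual ℝ X, ((z.2 w.1 + w.2 z.1 : ℝ) : EReal) - h w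

/-- The averaging map `A h := (1/2)(h + h* ∘ i)`. -/
def Amap (h : X × StrongDual ℝ X → EReal) : X × StrongDual ℝ X → EReal :=
  fun z => (((1 : ℝ)/2 : ℝ) : EReal) * (h z + conjI h z)

/-- Monotone multivalued operator `T : X ⇉ X*`. -/
def IsMonotoneOp (T : X → Set (StrongDual ℝ X)) : Prop :=
  ∀ ⦃x p y q⦄, p ∈ T x → q ∈ T y → 0 ≤ (p - q) (x - y)

/-- Maximally monotone operator. -/
def IsMaxMonotoneOp (T : X → Set (StrongDual ℝ X)) : Prop :=
  IsMonotoneOp T ∧ ∀ x p, (∀ y q, q ∈ T y → 0 ≤ (p - q) (x - y)) → p ∈ T x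

/-- The Fitzpatrick family `H(T)`: lsc convex `h ≥ ⟨·,·⟩` with equality on `gph T`. -/
def InFitzFamily (T : X → Set (StrongDual ℝ X)) (h : X × StrongDual ℝ X → EReal) : Prop :=
  LowerSemicontinuous h ∧ EConvexOn h ∧ (∀ z, (pairing z : EReal) ≤ h z) ∧
    ∀ x p, p ∈ T x → h (x, p) = (pairing (x, p) : EReal)

/-- The δ-subdifferential of `h : X × X* → ℝ ∪ {+∞}` with respect to the pairing
`⟨(x,x*),(y*,y)⟩ = ⟨x,y*⟩ + ⟨y,x*⟩`. -/
def epsSubdiff2 (h : X × StrongDual ℝ X → EReal) (δ : ℝ) (z : X × StrongDual ℝ X) :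
    Set (StrongDual ℝ X × X) :=
  {w | h z ≠ ⊤ ∧ ∀ u : X × StrongDual ℝ X,
    h z + ((w.1 (u.1 - z.1) + (u.2 - z.2) w.2 : ℝ) : EReal) ≤ h u + (δ : EReal)}

/-- The Fenchel–Young function `f^{FY}(x,x*) = f(x) + f*(x*)`. -/
def FYfn (f : X → EReal) (z : X × StrongDual ℝ X) : EReal := f z.1 + fconj f z.2

/-- The pointwise limit `A^∞ h` of the non-increasing sequence `{Aⁿh}_{n ≥ 1}`,
realized as a pointwise infimum. -/
def AinfMap (h : X × StrongDual ℝ X → EReal) (z : X × StrongDual ℝ X) : EReal :=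
  ⨅ n : ℕ, Amap^[n + 1] h z

/-!
Write `fₙ = Aⁿh`. The four properties `f ≥ ⟨·,·⟩`, `f* ∘ i ≤ f`, `dom (f* ∘ i) ⊆ dom f` and
properness survive one averaging step, and under them `A f ≤ f`; so `fₙ` decreases to
`g = A^∞ h`. Conjugation turns this infimum into a supremum, and `fₙ* ∘ i ≤ fₘ` for all `n, m`
gives `g* ∘ i ≤ g`. Conversely, at a point `z ∈ dom h` put `M = g*(i z)`; then
`fₙ₊₁(z) = (fₙ(z) + fₙ*(i z))/2 ≤ (fₙ(z) + M)/2`, which forces `infₙ fₙ(z) ≤ M`.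
-/

namespace EReal

lemma coe_sub_le_comm {a : ℝ} {b c : EReal} (h : (a : EReal) - c ≤ b) : (a : EReal) - b ≤ c := by
  induction c with
  | bot =>
    rw [coe_sub_bot, top_le_iff] at h
    simp [h]
  | coe c =>
    calc (a : EReal) - b ≤ (a : EReal) - ((a : EReal) - (c : EReal)) := sub_le_sub le_rfl h
      _ = c := by norm_cast; ring
  | top => exact le_top

lemma coe_sub_iInf_le {ι : Sort*} (a : ℝ) (b : ι → EReal) :
    (a : EReal) - ⨅ i, b i ≤ ⨆ i, ((a : EReal) - b i) :=
  coe_sub_le_comm <| le_iInf fun i => coe_sub_le_comm <| le_iSup (fun i => (a : EReal) - b i) i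

end EReal

lemma exists_lt_of_le_midpoint {a : ℕ → ℝ} {M r : ℝ} (hMr : M < r)
    (h : ∀ n, a (n + 1) ≤ (a n + M) / 2) : ∃ n, a n < r := by
  by_contra! hr
  have hbdd : BddBelow (Set.range a) := ⟨r, Set.forall_mem_range.2 hr⟩
  have hrL : r ≤ ⨅ n, a n := le_ciInf hr
  obtain ⟨n, hn⟩ := exists_lt_of_ciInf_lt (show ⨅ n, a n < (⨅ n, a n) + (r - M) by linarith)
  linarith [h n, ciInf_le hbdd (n + 1)]

/-- The pairing for which `conjI f z = ⨆ w, crossPairing z w - f w` holds definitionally. -/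
def crossPairing (z w : X × StrongDual ℝ X) : ℝ := z.2 w.1 + w.2 z.1

lemma crossPairing_comm (z w : X × StrongDual ℝ X) : crossPairing z w = crossPairing w z :=
  add_comm _ _

lemma crossPairing_self (z : X × StrongDual ℝ X) : crossPairing z z = 2 * pairing z :=
  (two_mul _).symm

section conjI

variable {f g : X × StrongDual ℝ X → EReal}

lemma coe_crossPairing_sub_le_conjI (f : X × StrongDual ℝ X → EReal) (z w : X × StrongDual ℝ X) :
    (crossPairing z w : EReal) - f w ≤ conjI f z :=
  le_iSup (fun w => (crossPairing z w : EReal) - f w) w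

lemma conjI_le_of_forall {z : X × StrongDual ℝ X} {b : EReal}
    (h : ∀ w, (crossPairing z w : EReal) - f w ≤ b) : conjI f z ≤ b :=
  iSup_le h

lemma conjI_anti (h : ∀ w, f w ≤ g w) (z : X × StrongDual ℝ X) : conjI g z ≤ conjI f z :=
  iSup_mono fun w => EReal.sub_le_sub le_rfl (h w)

lemma coe_crossPairing_sub_conjI_le (f : X × StrongDual ℝ X → EReal) (z w : X × StrongDual ℝ X) :
    (crossPairing z w : EReal) - conjI f w ≤ f z :=
  EReal.coe_sub_le_comm (crossPairing_comm z w ▸ coe_crossPairing_sub_le_conjI f w z)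

lemma conjI_ne_bot {z₀ : X × StrongDual ℝ X} (h₀ : f z₀ ≠ ⊤) (h₀' : f z₀ ≠ ⊥)
    (z : X × StrongDual ℝ X) : conjI f z ≠ ⊥ := by
  lift f z₀ to ℝ using ⟨h₀, h₀'⟩ with r hr
  refine ne_bot_of_le_ne_bot ?_ (coe_crossPairing_sub_le_conjI f z z₀)
  rw [← hr, ← EReal.coe_sub]
  exact EReal.coe_ne_bot _

lemma conjI_iInf_le {ι : Sort*} (F : ι → X × StrongDual ℝ X → EReal) (z : X × StrongDual ℝ X) :
    conjI (fun w => ⨅ i, F i w) z ≤ ⨆ i, conjI (F i) z :=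
  conjI_le_of_forall fun w => (EReal.coe_sub_iInf_le _ _).trans <|
    iSup_mono fun i => coe_crossPairing_sub_le_conjI (F i) z w

lemma conjI_iInf_le_iInf {ι : Type*} [Preorder ι] [IsDirectedOrder ι]
    {F : ι → X × StrongDual ℝ X → EReal} (hF : ∀ w, Antitone fun i => F i w)
    (hFc : ∀ i z, conjI (F i) z ≤ F i z) (z : X × StrongDual ℝ X) :
    conjI (fun w => ⨅ i, F i w) z ≤ ⨅ i, F i z := by
  refine (conjI_iInf_le F z).trans (iSup_le fun i => le_iInf fun j => ?_)
  obtain ⟨k, hik, hjk⟩ := directed_of (· ≤ ·) i j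
  calc conjI (F i) z ≤ conjI (F k) z := conjI_anti (fun w => hF w hik) z
    _ ≤ F k z := hFc k z
    _ ≤ F j z := hF z hjk

end conjI

lemma Amap_eq_coe {f : X × StrongDual ℝ X → EReal} {z : X × StrongDual ℝ X} {r s : ℝ}
    (hr : f z = r) (hs : conjI f z = s) : Amap f z = ((r + s) / 2 : ℝ) := by
  rw [Amap, hr, hs, ← EReal.coe_add, ← EReal.coe_mul]
  congr 1
  ring

structure AmapInvariant (f : X × StrongDual ℝ X → EReal) : Prop where
  pairing_le : ∀ z, (pairing z : EReal) ≤ f z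
  conjI_le : ∀ z, conjI f z ≤ f z
  conjI_eq_top : ∀ z, f z = ⊤ → conjI f z = ⊤
  exists_ne_top : ∃ z, f z ≠ ⊤

namespace AmapInvariant

variable {f : X × StrongDual ℝ X → EReal} (hf : AmapInvariant f)
include hf

lemma ne_bot (z : X × StrongDual ℝ X) : f z ≠ ⊥ :=
  ne_bot_of_le_ne_bot (EReal.coe_ne_bot _) (hf.pairing_le z)

lemma conjI_ne_bot (z : X × StrongDual ℝ X) : conjI f z ≠ ⊥ :=
  have ⟨z₀, hz₀⟩ := hf.exists_ne_top
  _root_.conjI_ne_bot hz₀ (hf.ne_bot z₀) z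

lemma exists_coe {z : X × StrongDual ℝ X} (hz : f z ≠ ⊤) :
    ∃ r s : ℝ, f z = r ∧ conjI f z = s ∧ s ≤ r := by
  lift f z to ℝ using ⟨hz, hf.ne_bot z⟩ with r hr
  have hs : conjI f z ≠ ⊤ := ne_top_of_le_ne_top (hr ▸ EReal.coe_ne_top r) (hf.conjI_le z)
  lift conjI f z to ℝ using ⟨hs, hf.conjI_ne_bot z⟩ with s hs'
  exact ⟨r, s, rfl, rfl, EReal.coe_le_coe_iff.1 (hr ▸ hs' ▸ hf.conjI_le z)⟩

lemma Amap_le (z : X × StrongDual ℝ X) : Amap f z ≤ f z := by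
  by_cases hz : f z = ⊤
  · exact hz ▸ le_top
  · obtain ⟨r, s, hr, hs, hsr⟩ := hf.exists_coe hz
    rw [Amap_eq_coe hr hs, hr, EReal.coe_le_coe_iff]
    linarith

lemma Amap_eq_top_iff (z : X × StrongDual ℝ X) : Amap f z = ⊤ ↔ f z = ⊤ := by
  refine ⟨fun hA => by_contra fun hz => ?_, fun hz => ?_⟩
  · obtain ⟨r, s, hr, hs, -⟩ := hf.exists_coe hz
    exact EReal.coe_ne_top _ ((Amap_eq_coe hr hs).symm.trans hA)
  · rw [Amap, hz, EReal.top_add_of_ne_bot (hf.conjI_ne_bot z),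
      EReal.mul_top_of_pos (EReal.coe_pos.2 (by norm_num))]

lemma pairing_le_Amap (z : X × StrongDual ℝ X) : (pairing z : EReal) ≤ Amap f z := by
  by_cases hz : f z = ⊤
  · exact (hf.Amap_eq_top_iff z).2 hz ▸ le_top
  · obtain ⟨r, s, hr, hs, -⟩ := hf.exists_coe hz
    have hFY := coe_crossPairing_sub_le_conjI f z z
    rw [hr, hs, ← EReal.coe_sub, EReal.coe_le_coe_iff, crossPairing_self] at hFY
    rw [Amap_eq_coe hr hs, EReal.coe_le_coe_iff]
    linarith

/-- `(A f)* ≤ (f* + f**)/2 ≤ A f`: conjugation is convex and `f** ≤ f`. -/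
lemma conjI_Amap_le (z : X × StrongDual ℝ X) : conjI (Amap f) z ≤ Amap f z := by
  refine conjI_le_of_forall fun w => ?_
  by_cases hw : f w = ⊤
  · simp [(hf.Amap_eq_top_iff w).2 hw]
  · obtain ⟨r, s, hr, hs, -⟩ := hf.exists_coe hw
    have h₁ : ((crossPairing z w - r : ℝ) : EReal) ≤ conjI f z := by
      rw [EReal.coe_sub, ← hr]; exact coe_crossPairing_sub_le_conjI f z w
    have h₂ : ((crossPairing z w - s : ℝ) : EReal) ≤ f z := by
      rw [EReal.coe_sub, ← hs]; exact coe_crossPairing_sub_conjI_le f z w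
    calc (crossPairing z w : EReal) - Amap f w
        = (((1 : ℝ) / 2 : ℝ) : EReal) *
            (((crossPairing z w - r : ℝ) : EReal) + ((crossPairing z w - s : ℝ) : EReal)) := by
          rw [Amap_eq_coe hr hs, ← EReal.coe_sub, ← EReal.coe_add, ← EReal.coe_mul]
          congr 1
          ring
      _ ≤ (((1 : ℝ) / 2 : ℝ) : EReal) * (conjI f z + f z) :=
          mul_le_mul_of_nonneg_left (add_le_add h₁ h₂) (EReal.coe_nonneg.2 (by norm_num))
      _ = Amap f z := by rw [Amap, add_comm (f z)]

protected lemma Amap : AmapInvariant (Amap f) where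
  pairing_le := hf.pairing_le_Amap
  conjI_le := hf.conjI_Amap_le
  conjI_eq_top z hz :=
    top_le_iff.1 <| hf.conjI_eq_top z ((hf.Amap_eq_top_iff z).1 hz) ▸ conjI_anti hf.Amap_le z
  exists_ne_top :=
    have ⟨z, hz⟩ := hf.exists_ne_top
    ⟨z, fun hA => hz ((hf.Amap_eq_top_iff z).1 hA)⟩

lemma iterate (n : ℕ) : AmapInvariant (Amap^[n] f) := by
  induction n with
  | zero => exact hf
  | succ n ih => rw [Function.iterate_succ']; exact ih.Amap

lemma antitone_iterate (z : X × StrongDual ℝ X) : Antitone fun n => Amap^[n] f z :=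
  antitone_nat_of_succ_le fun n => by
    rw [Function.iterate_succ_apply']
    exact (hf.iterate n).Amap_le z

lemma AinfMap_le_iterate (n : ℕ) (z : X × StrongDual ℝ X) : AinfMap f z ≤ Amap^[n] f z :=
  (iInf_le _ n).trans (hf.antitone_iterate z n.le_succ)

lemma conjI_AinfMap_le (z : X × StrongDual ℝ X) : conjI (AinfMap f) z ≤ AinfMap f z :=
  conjI_iInf_le_iInf (F := fun n => Amap^[n + 1] f)
    (fun w => (hf.antitone_iterate w).comp_monotone fun _ _ => Nat.succ_le_succ)
    (fun n => (hf.iterate (n + 1)).conjI_le) z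

lemma le_conjI_AinfMap (z : X × StrongDual ℝ X) : AinfMap f z ≤ conjI (AinfMap f) z := by
  have hconj : ∀ n, conjI (Amap^[n] f) z ≤ conjI (AinfMap f) z :=
    fun n => conjI_anti (fun w => hf.AinfMap_le_iterate n w) z
  by_cases hz : f z = ⊤
  · calc AinfMap f z ≤ ⊤ := le_top
      _ = conjI (Amap f) z := (hf.Amap.conjI_eq_top z ((hf.Amap_eq_top_iff z).2 hz)).symm
      _ ≤ conjI (AinfMap f) z := hconj 1
  by_cases hc : conjI (AinfMap f) z = ⊤
  · exact hc ▸ le_top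
  obtain ⟨M, hM⟩ : ∃ M : ℝ, conjI (AinfMap f) z = M :=
    ⟨_, (EReal.coe_toReal hc (ne_bot_of_le_ne_bot (hf.conjI_ne_bot z) (hconj 0))).symm⟩
  rw [hM] at hconj ⊢
  have hreal (n : ℕ) : ∃ a b : ℝ, Amap^[n] f z = a ∧ conjI (Amap^[n] f) z = b ∧ b ≤ M :=
    have ⟨a, b, ha, hb, _⟩ :=
      (hf.iterate n).exists_coe (ne_top_of_le_ne_top hz (hf.antitone_iterate z n.zero_le))
    ⟨a, b, ha, hb, EReal.coe_le_coe_iff.1 (hb ▸ hconj n)⟩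
  choose a b ha hb hbM using hreal
  have hmid (n : ℕ) : a (n + 1) ≤ (a n + M) / 2 := by
    have hrec : ((a (n + 1) : ℝ) : EReal) = ((a n + b n) / 2 : ℝ) := by
      rw [← ha, Function.iterate_succ_apply', Amap_eq_coe (ha n) (hb n)]
    linarith [EReal.coe_injective hrec, hbM n]
  refine EReal.le_of_forall_lt_iff_le.1 fun r hr => ?_
  obtain ⟨n, hn⟩ := exists_lt_of_le_midpoint (EReal.coe_lt_coe_iff.1 hr) hmid
  exact (hf.AinfMap_le_iterate n z).trans (ha n ▸ EReal.coe_le_coe_iff.2 hn.le)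

lemma conjI_AinfMap (z : X × StrongDual ℝ X) : conjI (AinfMap f) z = AinfMap f z :=
  le_antisymm (hf.conjI_AinfMap_le z) (hf.le_conjI_AinfMap z)

end AmapInvariant

theorem statement12_general (T : X → Set (StrongDual ℝ X))
    (h : X × StrongDual ℝ X → EReal) (hF : InFitzFamily T h) (hproper : EProper h)
    (hle : ∀ z, conjI h z ≤ h z)
    (hdom : {z : X × StrongDual ℝ X | h z ≠ ⊤} = {z | conjI h z ≠ ⊤}) :
    ∀ z : X × StrongDual ℝ X, conjI (AinfMap h) z = AinfMap h z :=
  AmapInvariant.conjI_AinfMap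
    { pairing_le := hF.2.2.1
      conjI_le := hle
      conjI_eq_top := fun z hz => by_contra fun hc => (Set.ext_iff.1 hdom z).2 hc hz
      exists_ne_top := hproper.1 }

/-- if `h ∈ H(T)`, `h* ∘ i ≤ h`, `dom(h) = dom(h* ∘ i)` and `A^∞ h`
is lsc, then `A^∞ h` is autoconjugate. -/
theorem statement12 (T : X → Set (StrongDual ℝ X)) (hT : IsMaxMonotoneOp T)
    (h : X × StrongDual ℝ X → EReal) (hF : InFitzFamily T h) (hproper : EProper h)
    (hle : ∀ z, conjI h z ≤ h z)
    (hdom : {z : X × StrongDual ℝ X | h z ≠ ⊤} = {z | conjI h z ≠ ⊤})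
    (hlscA : LowerSemicontinuous (AinfMap h)) :
    ∀ z : X × StrongDual ℝ X, conjI (AinfMap h) z = AinfMap h z :=
  statement12_general T h hF hproper hle hdom
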